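/- Let ε ∈ ℝ and let F_ε : ℝ³ → ℝ³ be the Pikovsky–Topaj vector field. Let R : ℝ³ → ℝ³ be defined by R(ψ₁, ψ₂, ψ₃) = (π − ψ₃, π − ψ₂, π − ψ₁). Then: (i) R ∘ R = id; and (ii) if ψ : ℝ → ℝ³ is differentiable and satisfies ψ'(t) = F_ε(ψ(t)) for all t ∈ ℝ, then the function φ(t) := R(ψ(−t)) also satisfies φ'(t) = F_ε(φ(t)) for all t ∈ ℝ (i.e., the system is time-reversible with respect to the involution R). -/

import Mathlib

open Real

/-- The Pikovsky–Topaj vector field on ℝ³ (coded as `ℝ × ℝ × ℝ`). -/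
noncomputable def pikovskyTopaj (ε : ℝ) (p : ℝ × ℝ × ℝ) : ℝ × ℝ × ℝ :=
  (1 - 2 * ε * Real.sin p.1 + ε * Real.sin p.2.1,
   1 - 2 * ε * Real.sin p.2.1 + ε * Real.sin p.1 + ε * Real.sin p.2.2,
   1 - 2 * ε * Real.sin p.2.2 + ε * Real.sin p.2.1)

/-- The involution `R(ψ₁, ψ₂, ψ₃) = (π − ψ₃, π − ψ₂, π − ψ₁)`. -/
noncomputable def involR (p : ℝ × ℝ × ℝ) : ℝ × ℝ × ℝ :=
  (Real.pi - p.2.2, Real.pi - p.2.1, Real.pi - p.1)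

/-!
`R` is affine with linear part `-J`, where `J` reverses the order of the coordinates, and
`sin (π - x) = sin x` gives `F_ε (R p) = J (F_ε p)`. For any map `R` with derivative `L` such that
`F ∘ R = -L ∘ F`, the chain rule shows that `t ↦ R (ψ (-t))` solves `ψ' = F ψ` whenever `ψ` does.
-/

theorem HasDerivAt.comp_neg_of_reversing {E : Type*} [NormedAddCommGroup E] [NormedSpace ℝ E]
    {F R : E → E} {L : E →L[ℝ] E} (hR : ∀ p, HasFDerivAt R L p) (hF : ∀ p, F (R p) = -L (F p))
    {ψ : ℝ → E} (hψ : ∀ t, HasDerivAt ψ (F (ψ t)) t) (t : ℝ) :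
    HasDerivAt (fun s => R (ψ (-s))) (F (R (ψ (-t)))) t := by
  have hψneg : HasDerivAt (fun s => ψ (-s)) (-F (ψ (-t))) t := by
    simpa [Function.comp_def] using (hψ (-t)).scomp t (hasDerivAt_neg t)
  simpa [Function.comp_def, hF] using (hR (ψ (-t))).comp_hasDerivAt t hψneg

def reverseCoords : (ℝ × ℝ × ℝ) →L[ℝ] ℝ × ℝ × ℝ :=
  ((ContinuousLinearMap.snd ℝ ℝ ℝ).comp (ContinuousLinearMap.snd ℝ ℝ (ℝ × ℝ))).prod
    (((ContinuousLinearMap.fst ℝ ℝ ℝ).comp (ContinuousLinearMap.snd ℝ ℝ (ℝ × ℝ))).prod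
      (ContinuousLinearMap.fst ℝ ℝ (ℝ × ℝ)))

@[simp]
theorem reverseCoords_apply (p : ℝ × ℝ × ℝ) : reverseCoords p = (p.2.2, p.2.1, p.1) := rfl

theorem involR_involutive : Function.Involutive involR := fun p => by
  simp [involR]

theorem hasFDerivAt_involR (p : ℝ × ℝ × ℝ) : HasFDerivAt involR (-reverseCoords) p := by
  have := (hasFDerivAt_const (π, π, π) p).sub reverseCoords.hasFDerivAt
  rwa [zero_sub] at this

theorem pikovskyTopaj_involR (ε : ℝ) (p : ℝ × ℝ × ℝ) :
    pikovskyTopaj ε (involR p) = reverseCoords (pikovskyTopaj ε p) := by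
  simp only [pikovskyTopaj, involR, reverseCoords_apply, sin_pi_sub]
  ext <;> ring

/-- The Pikovsky–Topaj system is time-reversible with respect to the involution `R`. -/
theorem pikovskyTopaj_reversible (ε : ℝ) :
    involR ∘ involR = id ∧
    ∀ ψ : ℝ → ℝ × ℝ × ℝ,
      (∀ t : ℝ, HasDerivAt ψ (pikovskyTopaj ε (ψ t)) t) →
      ∀ t : ℝ, HasDerivAt (fun s => involR (ψ (-s)))
        (pikovskyTopaj ε (involR (ψ (-t)))) t :=
  ⟨involR_involutive.comp_self, fun _ hψ =>
    HasDerivAt.comp_neg_of_reversing hasFDerivAt_involR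
      (fun p => by rw [pikovskyTopaj_involR, neg_apply, neg_neg]) hψ⟩
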